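/- arXiv:1903.05671 — 6 statements merged into one kernel-verified Lean document; each statement's English description precedes it below -/
import Mathlib

section
/- If f is α-strongly convex and differentiable with minimizer x*, and (x(t), v(t)) satisfy the damped Hamiltonian dynamics ẋ = v, v̇ = -2√α v - ∇f(x) with v(0) = 0, then f(x(t)) - f(x*) ≤ 2 e^{-√α t} (f(x(0)) - f(x*)). -/
open Real InnerProductSpace

theorem damped_dynamics_convergence
    {d : ℕ} {f : EuclideanSpace ℝ (Fin d) → ℝ} {α : ℝ} (hα : 0 < α)
    (hdiff : Differentiable ℝ f)
    (hsc : ∀ x y : EuclideanSpace ℝ (Fin d),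
      f x ≥ f y + ⟪gradient f y, x - y⟫_ℝ + (α / 2) * ‖x - y‖ ^ 2)
    (xstar : EuclideanSpace ℝ (Fin d)) (hmin : ∀ y, f xstar ≤ f y)
    (x v : ℝ → EuclideanSpace ℝ (Fin d))
    (hx : ∀ t, HasDerivAt x (v t) t)
    (hv : ∀ t, HasDerivAt v (-(2 * Real.sqrt α) • v t - gradient f (x t)) t)
    (hv0 : v 0 = 0) :
    ∀ t ≥ 0, f (x t) - f xstar ≤
      2 * Real.exp (-(Real.sqrt α) * t) * (f (x 0) - f xstar) := by
  set s := Real.sqrt α with hs_def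
  have hs : 0 < s := Real.sqrt_pos.mpr hα
  have hs2 : s * s = α := Real.mul_self_sqrt hα.le
  set g : ℝ → EuclideanSpace ℝ (Fin d) := fun t => gradient f (x t) with hg_def
  set w : ℝ → EuclideanSpace ℝ (Fin d) := fun t => v t + s • (x t - xstar) with hw_def
  set E : ℝ → ℝ := fun t => (f (x t) - f xstar) + (1/2) * ⟪w t, w t⟫_ℝ with hE_def
  -- derivative of f ∘ x
  have hfx : ∀ t, HasDerivAt (fun t => f (x t)) ⟪g t, v t⟫_ℝ t := by
    intro t
    have h1 : HasGradientAt f (g t) (x t) := (hdiff (x t)).hasGradientAt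
    have h2 := h1.hasFDerivAt.comp_hasDerivAt t (hx t)
    exact h2
  -- derivative of w
  have hw : ∀ t, HasDerivAt w ((-s) • v t - g t) t := by
    intro t
    have h1 : HasDerivAt (fun t => x t - xstar) (v t) t := (hx t).sub_const _
    have h2 := (hv t).add (h1.const_smul s)
    refine h2.congr_deriv ?_
    rw [hg_def]
    module
  -- derivative of E
  have hE : ∀ t, HasDerivAt E
      (⟪g t, v t⟫_ℝ + (1/2) * (⟪w t, (-s) • v t - g t⟫_ℝ + ⟪(-s) • v t - g t, w t⟫_ℝ)) t := by
    intro t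
    exact ((hfx t).sub_const _).add
      ((HasDerivAt.inner ℝ (hw t) (hw t)).const_mul (1/2))
  -- key inequality : E' + s E ≤ 0
  have key : ∀ t, ⟪g t, v t⟫_ℝ + (1/2) * (⟪w t, (-s) • v t - g t⟫_ℝ + ⟪(-s) • v t - g t, w t⟫_ℝ)
      + s * E t ≤ 0 := by
    intro t
    have hsc' := hsc xstar (x t)
    have hBineq : ⟪g t, x t - xstar⟫_ℝ ≥ (f (x t) - f xstar) + (α/2) * ⟪x t - xstar, x t - xstar⟫_ℝ := by
      have h1 : ⟪g t, xstar - x t⟫_ℝ = -⟪g t, x t - xstar⟫_ℝ := by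
        rw [show xstar - x t = -(x t - xstar) by abel, inner_neg_right]
      have h2 : ‖xstar - x t‖ ^ 2 = ⟪x t - xstar, x t - xstar⟫_ℝ := by
        rw [show xstar - x t = -(x t - xstar) by abel, norm_neg,
          real_inner_self_eq_norm_sq]
      rw [ge_iff_le] at hsc' ⊢
      rw [h1, h2] at hsc'
      linarith
    have hC : 0 ≤ ⟪v t, v t⟫_ℝ := real_inner_self_nonneg
    set A := ⟪g t, v t⟫_ℝ
    set B := ⟪g t, x t - xstar⟫_ℝ
    set C := ⟪v t, v t⟫_ℝ
    set D := ⟪v t, x t - xstar⟫_ℝ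
    set N := ⟪x t - xstar, x t - xstar⟫_ℝ
    have hDsym : ⟪x t - xstar, v t⟫_ℝ = D := real_inner_comm _ _
    have hBsym : ⟪x t - xstar, g t⟫_ℝ = B := real_inner_comm _ _
    have hAsym : ⟪v t, g t⟫_ℝ = A := real_inner_comm _ _
    have hww : ⟪w t, w t⟫_ℝ = C + 2 * s * D + (s*s) * N := by
      simp only [hw_def, inner_add_add_self, inner_smul_left, inner_smul_right,
        real_inner_smul_left, real_inner_smul_right, RCLike.conj_to_real, hDsym]
      ring
    have h1 : ⟪w t, (-s) • v t - g t⟫_ℝ = -s*C - A - s*s*D - s*B := by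
      simp only [hw_def, inner_add_left, inner_sub_right, inner_smul_left,
        inner_smul_right, real_inner_smul_left, real_inner_smul_right,
        RCLike.conj_to_real, hDsym, hBsym, hAsym]
      ring
    have h2 : ⟪(-s) • v t - g t, w t⟫_ℝ = -s*C - A - s*s*D - s*B := by
      rw [real_inner_comm]; exact h1
    rw [h1, h2, hE_def]
    simp only [hww]
    have hBge : B ≥ (f (x t) - f xstar) + (α/2) * N := hBineq
    have heq : A + 1 / 2 * (-s * C - A - s * s * D - s * B + (-s * C - A - s * s * D - s * B)) +
        s * (f (x t) - f xstar + 1 / 2 * (C + 2 * s * D + s * s * N))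
        = -(s/2) * C - s * B + s * (f (x t) - f xstar) + (s * α / 2) * N := by
      rw [← hs2]; ring
    rw [heq]
    have h3 : s * ((f (x t) - f xstar) + (α/2) * N) ≤ s * B :=
      mul_le_mul_of_nonneg_left hBge hs.le
    have h4 : 0 ≤ s * C := mul_nonneg hs.le hC
    nlinarith [h3, h4]
  -- Gronwall via monotonicity of G t = E t * exp (s t)
  set G : ℝ → ℝ := fun t => E t * Real.exp (s * t) with hG_def
  have hG : ∀ t, HasDerivAt G
      ((⟪g t, v t⟫_ℝ + (1/2) * (⟪w t, (-s) • v t - g t⟫_ℝ + ⟪(-s) • v t - g t, w t⟫_ℝ)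
        + s * E t) * Real.exp (s * t)) t := by
    intro t
    have hexp : HasDerivAt (fun t => Real.exp (s * t)) (s * Real.exp (s * t)) t := by
      simpa [mul_comm] using ((hasDerivAt_id t).const_mul s).exp
    have := (hE t).mul hexp
    refine this.congr_deriv ?_
    ring
  have hanti : Antitone G := by
    apply antitone_of_deriv_nonpos
    · intro t; exact (hG t).differentiableAt
    · intro t
      rw [(hG t).deriv]
      exact mul_nonpos_of_nonpos_of_nonneg (key t) (Real.exp_pos _).le
  -- gradient at minimizer is zero
  have hgrad0 : gradient f xstar = 0 := by
    have hloc : IsLocalMin f xstar := by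
      apply IsMinOn.isLocalMin _ Filter.univ_mem
      intro y _; exact hmin y
    have := hloc.fderiv_eq_zero
    simp [gradient, this]
  -- E 0 ≤ 2 (f (x 0) - f xstar)
  have hM0 : 0 ≤ f (x 0) - f xstar := by linarith [hmin (x 0)]
  have hE0 : E 0 ≤ 2 * (f (x 0) - f xstar) := by
    have hsc0 := hsc (x 0) xstar
    rw [hgrad0] at hsc0
    simp only [inner_zero_left] at hsc0
    have hw0 : ⟪w 0, w 0⟫_ℝ = α * ‖x 0 - xstar‖ ^ 2 := by
      have hweq : w 0 = s • (x 0 - xstar) := by simp [hw_def, hv0]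
      rw [hweq, real_inner_self_eq_norm_sq, norm_smul, mul_pow, Real.norm_eq_abs, sq_abs, ← hs2]; ring
    rw [hE_def]
    simp only [hw0]
    linarith
  intro t ht
  have hGle : G t ≤ G 0 := hanti ht
  have hEt : f (x t) - f xstar ≤ E t := by
    rw [hE_def]
    have hnn : (0:ℝ) ≤ ⟪w t, w t⟫_ℝ := real_inner_self_nonneg
    simp only
    linarith
  have hexp0 : G 0 = E 0 := by simp [hG_def]
  have hexp_pos : (0:ℝ) < Real.exp (s * t) := Real.exp_pos _
  have hEle : E t ≤ E 0 * Real.exp (-s * t) := by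
    rw [hexp0] at hGle
    have h2 : E t * Real.exp (s * t) * Real.exp (-s * t) ≤ E 0 * Real.exp (-s * t) :=
      mul_le_mul_of_nonneg_right hGle (Real.exp_pos _).le
    rwa [mul_assoc, ← Real.exp_add, show s * t + -s * t = 0 by ring, Real.exp_zero,
      mul_one] at h2
  have hfinal : E 0 * Real.exp (-s * t) ≤ 2 * (f (x 0) - f xstar) * Real.exp (-s * t) :=
    mul_le_mul_of_nonneg_right hE0 (Real.exp_pos _).le
  calc f (x t) - f xstar ≤ E t := hEt
    _ ≤ E 0 * Real.exp (-s * t) := hEle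
    _ ≤ 2 * (f (x 0) - f xstar) * Real.exp (-s * t) := hfinal
    _ = 2 * Real.exp (-s * t) * (f (x 0) - f xstar) := by ring
end

section
/- Under the damped Hamiltonian dynamics ẋ = v, v̇ = -2√α v - ∇f(x) for an α-strongly convex differentiable f with minimizer x*, the Lyapunov function L(t) = f(x(t)) - f(x*) + (1/2)‖√α (x(t) - x*) + v(t)‖² satisfies L'(t) ≤ -√α L(t) for all t. -/
open Real InnerProductSpace

theorem lyapunov_derivative_bound
    {d : ℕ} {f : EuclideanSpace ℝ (Fin d) → ℝ} {α : ℝ} (hα : 0 < α)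
    (hdiff : Differentiable ℝ f)
    (hsc : ∀ x y : EuclideanSpace ℝ (Fin d),
      f x ≥ f y + ⟪gradient f y, x - y⟫_ℝ + (α / 2) * ‖x - y‖ ^ 2)
    (xstar : EuclideanSpace ℝ (Fin d)) (hmin : ∀ y, f xstar ≤ f y)
    (x v : ℝ → EuclideanSpace ℝ (Fin d))
    (hx : ∀ t, HasDerivAt x (v t) t)
    (hv : ∀ t, HasDerivAt v (-(2 * Real.sqrt α) • v t - gradient f (x t)) t)
    (L : ℝ → ℝ)
    (hL : L = fun t => f (x t) - f xstar +
      (1 / 2) * ‖(Real.sqrt α) • (x t - xstar) + v t‖ ^ 2) :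
    ∀ t, deriv L t ≤ -(Real.sqrt α) * L t := by
  subst hL
  intro t
  have hs0 : 0 ≤ Real.sqrt α := Real.sqrt_nonneg α
  have hs2 : Real.sqrt α * Real.sqrt α = α := Real.mul_self_sqrt hα.le
  set s := Real.sqrt α with hsdef
  set X := x t with hX
  set V := v t with hV
  set G := gradient f X with hG
  have hu : HasDerivAt (fun τ => s • (x τ - xstar) + v τ)
      ((-s) • V - G) t := by
    have h1 := (((hx t).sub_const xstar).const_smul s).add (hv t)
    refine h1.congr_deriv ?_
    module
  have hfd : HasDerivAt (fun τ => f (x τ)) ⟪G, V⟫_ℝ t := by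
    have hg : HasFDerivAt f (InnerProductSpace.toDual ℝ _ G) X :=
      (hdiff X).hasGradientAt
    have := hg.comp_hasDerivAt t (hx t)
    simp at this
    exact this
  have hnorm : HasDerivAt (fun τ => (1/2 : ℝ) * ‖s • (x τ - xstar) + v τ‖ ^ 2)
      ⟪s • (X - xstar) + V, (-s) • V - G⟫_ℝ t := by
    have h := (hu.inner ℝ hu).const_mul (1/2 : ℝ)
    have heq : (fun τ => (1/2 : ℝ) * ‖s • (x τ - xstar) + v τ‖ ^ 2)
        = fun τ => (1/2 : ℝ) * ⟪s • (x τ - xstar) + v τ, s • (x τ - xstar) + v τ⟫_ℝ := by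
      funext τ
      rw [real_inner_self_eq_norm_sq]
    rw [heq]
    refine h.congr_deriv ?_
    rw [real_inner_comm ((-s) • V - G)]
    ring
  have hLd : HasDerivAt (fun τ => f (x τ) - f xstar +
      (1/2 : ℝ) * ‖s • (x τ - xstar) + v τ‖ ^ 2)
      (⟪G, V⟫_ℝ + ⟪s • (X - xstar) + V, (-s) • V - G⟫_ℝ) t :=
    (hfd.sub_const _).add hnorm
  rw [hLd.deriv]
  show _ ≤ -s * (f X - f xstar + (1/2 : ℝ) * ‖s • (X - xstar) + V‖ ^ 2)
  have e1 : ⟪s • (X - xstar) + V, (-s) • V - G⟫_ℝ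
      = -(s*s)*⟪X - xstar, V⟫_ℝ - s*⟪X - xstar, G⟫_ℝ - s*‖V‖^2 - ⟪V, G⟫_ℝ := by
    simp only [inner_add_left, inner_sub_right, inner_smul_left, inner_smul_right,
      RCLike.conj_to_real, real_inner_self_eq_norm_sq]
    ring
  have e2 : ‖s • (X - xstar) + V‖^2
      = (s*s)*‖X - xstar‖^2 + 2*s*⟪X - xstar, V⟫_ℝ + ‖V‖^2 := by
    rw [norm_add_sq_real, norm_smul, real_inner_smul_left, mul_pow]
    simp [Real.norm_eq_abs, abs_of_nonneg hs0]
    ring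
  have key : f X - f xstar + (α/2)*‖X - xstar‖^2 ≤ ⟪X - xstar, G⟫_ℝ := by
    have hscv := hsc xstar X
    rw [norm_sub_rev] at hscv
    have hc : ⟪gradient f X, xstar - X⟫_ℝ = -⟪X - xstar, G⟫_ℝ := by
      rw [real_inner_comm, ← neg_sub X xstar, inner_neg_left, ← hG]
    rw [hc] at hscv
    linarith
  have hVG : ⟪V, G⟫_ℝ = ⟪G, V⟫_ℝ := real_inner_comm G V
  have hVsq : (0:ℝ) ≤ ‖V‖^2 := sq_nonneg _
  have ha : s * s * ⟪X - xstar, V⟫_ℝ = α * ⟪X - xstar, V⟫_ℝ := by rw [hs2]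
  rw [e1, e2, hs2]
  nlinarith [mul_nonneg hs0 hVsq, mul_le_mul_of_nonneg_left key hs0, hVG, ha]
end

section
/- Let f be α-strongly convex and L-smooth with minimizer x*, and let s ≤ 1/√L. Define one step of the discretization: x' = x + s v; v' = v − (1+s√α)^{-1}(s√α v + s∇f(x')) − s√α v' (i.e., v' = (1+s√α)^{-1}[v − (1+s√α)^{-1}(s√α v + s∇f(x'))]); x₊ = x' − (1/L)∇f(x'); v₊ = v' + (1+s√α)^{-1}(√α/L)∇f(x'). Then with L(x,v) = f(x) − f(x*) + (1/2)‖√α(x − x*) + (1+s√α)v‖², one has L(x₊, v₊) ≤ (1 + s√α)^{-1} L(x, v). -/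
open Real InnerProductSpace

private lemma agd_expand_norm {n : ℕ} (A v g : EuclideanSpace ℝ (Fin n)) (p q r : ℝ) :
    ‖p • A + q • v + r • g‖ ^ 2 = p^2*‖A‖^2 + q^2*‖v‖^2 + r^2*‖g‖^2
      + 2*p*q*⟪A,v⟫_ℝ + 2*p*r*⟪A,g⟫_ℝ + 2*q*r*⟪v,g⟫_ℝ := by
  simp only [← real_inner_self_eq_norm_sq]
  simp only [inner_add_left, inner_add_right, real_inner_smul_left, real_inner_smul_right]
  rw [real_inner_comm v A, real_inner_comm g A, real_inner_comm g v]; ring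

private lemma agd_descent {n : ℕ} {f : EuclideanSpace ℝ (Fin n) → ℝ} {L : ℝ} (hL : 0 < L)
    (hdiff : Differentiable ℝ f)
    (hsmooth : ∀ x y : EuclideanSpace ℝ (Fin n),
      ‖gradient f x - gradient f y‖ ≤ L * ‖x - y‖) (p q : EuclideanSpace ℝ (Fin n)) :
    f q ≤ f p + ⟪gradient f p, q - p⟫_ℝ + L / 2 * ‖q - p‖ ^ 2 := by
  set w := q - p with hw
  have hgradlip : LipschitzWith L.toNNReal (gradient f) := by
    apply LipschitzWith.of_dist_le_mul
    intro a b
    simpa [dist_eq_norm, Real.coe_toNNReal _ hL.le] using hsmooth a b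
  have hγ : ∀ t : ℝ, HasDerivAt (fun t : ℝ => f (p + t • w))
      (⟪gradient f (p + t • w), w⟫_ℝ) t := by
    intro t
    have h1 : HasGradientAt f (gradient f (p + t • w)) (p + t • w) :=
      (hdiff _).hasGradientAt
    have h2 : HasDerivAt (fun t : ℝ => p + t • w) w t := by
      simpa using ((hasDerivAt_id t).smul_const w).const_add p
    have := h1.hasFDerivAt.comp_hasDerivAt t h2
    exact this
  have hcont : Continuous (fun t : ℝ => ⟪gradient f (p + t • w), w⟫_ℝ) := by
    apply Continuous.inner
    · exact hgradlip.continuous.comp (by fun_prop)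
    · exact continuous_const
  have hint : ∫ t in (0:ℝ)..1, ⟪gradient f (p + t • w), w⟫_ℝ = f q - f p := by
    rw [intervalIntegral.integral_eq_sub_of_hasDerivAt (fun t _ => hγ t)
      (hcont.intervalIntegrable 0 1)]
    simp [hw]
  have hbound : ∀ t ∈ Set.Icc (0:ℝ) 1,
      ⟪gradient f (p + t • w), w⟫_ℝ ≤ ⟪gradient f p, w⟫_ℝ + L * t * ‖w‖ ^ 2 := by
    intro t ht
    have h1 : ⟪gradient f (p + t • w) - gradient f p, w⟫_ℝ ≤
        ‖gradient f (p + t • w) - gradient f p‖ * ‖w‖ := real_inner_le_norm _ _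
    have h2 : ‖gradient f (p + t • w) - gradient f p‖ ≤ L * (t * ‖w‖) := by
      have := hsmooth (p + t • w) p
      simpa [norm_smul, abs_of_nonneg ht.1] using this
    have h3 : ⟪gradient f (p + t • w) - gradient f p, w⟫_ℝ ≤ L * t * ‖w‖ ^ 2 := by
      calc ⟪gradient f (p + t • w) - gradient f p, w⟫_ℝ ≤ _ := h1
        _ ≤ L * (t * ‖w‖) * ‖w‖ := by
            apply mul_le_mul_of_nonneg_right h2 (norm_nonneg _)
        _ = L * t * ‖w‖ ^ 2 := by ring
    rw [inner_sub_left] at h3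
    linarith
  have hmono : ∫ t in (0:ℝ)..1, ⟪gradient f (p + t • w), w⟫_ℝ ≤
      ∫ t in (0:ℝ)..1, (⟪gradient f p, w⟫_ℝ + L * t * ‖w‖ ^ 2) := by
    apply intervalIntegral.integral_mono_on zero_le_one
      (hcont.intervalIntegrable 0 1)
      ((by fun_prop : Continuous fun t : ℝ => ⟪gradient f p, w⟫_ℝ + L * t * ‖w‖ ^ 2).intervalIntegrable 0 1)
      hbound
  have hval : ∫ t in (0:ℝ)..1, (⟪gradient f p, w⟫_ℝ + L * t * ‖w‖ ^ 2)
      = ⟪gradient f p, w⟫_ℝ + L / 2 * ‖w‖ ^ 2 := by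
    have heq : (fun t : ℝ => ⟪gradient f p, w⟫_ℝ + L * t * ‖w‖ ^ 2)
        = fun t : ℝ => ⟪gradient f p, w⟫_ℝ + t * (L * ‖w‖ ^ 2) := by ext t; ring
    rw [heq, intervalIntegral.integral_add intervalIntegrable_const
      ((by fun_prop : Continuous fun t : ℝ => t * (L * ‖w‖ ^ 2)).intervalIntegrable 0 1),
      intervalIntegral.integral_mul_const, integral_id]
    simp
    ring
  rw [hint] at hmono
  rw [hval] at hmono
  linarith

set_option maxHeartbeats 1000000 in
theorem accelerated_gradient_descent_one_step
    {d : ℕ} {f : EuclideanSpace ℝ (Fin d) → ℝ} {α L s : ℝ}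
    (hα : 0 < α) (hαL : α ≤ L) (hdiff : Differentiable ℝ f)
    (hsc : ∀ x y : EuclideanSpace ℝ (Fin d),
      f x ≥ f y + ⟪gradient f y, x - y⟫_ℝ + (α / 2) * ‖x - y‖ ^ 2)
    (hsmooth : ∀ x y : EuclideanSpace ℝ (Fin d),
      ‖gradient f x - gradient f y‖ ≤ L * ‖x - y‖)
    (xstar : EuclideanSpace ℝ (Fin d)) (hmin : ∀ y, f xstar ≤ f y)
    (hs : 0 < s) (hsL : s ≤ 1 / Real.sqrt L)
    (x v : EuclideanSpace ℝ (Fin d))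
    (Lya : EuclideanSpace ℝ (Fin d) → EuclideanSpace ℝ (Fin d) → ℝ)
    (hLya : Lya = fun p q => f p - f xstar +
      (1 / 2) * ‖(Real.sqrt α) • (p - xstar) + (1 + s * Real.sqrt α) • q‖ ^ 2)
    (x' v' xp vp : EuclideanSpace ℝ (Fin d))
    (hx' : x' = x + s • v)
    (hv' : v' = (1 + s * Real.sqrt α)⁻¹ •
      (v - (1 + s * Real.sqrt α)⁻¹ • ((s * Real.sqrt α) • v + s • gradient f x')))
    (hxp : xp = x' - (1 / L) • gradient f x')
    (hvp : vp = v' + ((1 + s * Real.sqrt α)⁻¹ * (Real.sqrt α / L)) • gradient f x') :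
    Lya xp vp ≤ (1 + s * Real.sqrt α)⁻¹ * Lya x v := by
  have hL0 : (0:ℝ) < L := lt_of_lt_of_le hα hαL
  set a := Real.sqrt α with haa
  have ha0 : 0 < a := Real.sqrt_pos.mpr hα
  have ha2 : a ^ 2 = α := Real.sq_sqrt hα.le
  set c : ℝ := 1 + s * a with hcc
  have hc1 : 1 < c := by nlinarith
  have hc0 : (0:ℝ) < c := by linarith
  have hcne : c ≠ 0 := hc0.ne'
  have hLne : L ≠ 0 := hL0.ne'
  set g := gradient f x' with hg
  set A := x' - xstar with hA
  -- s^2 * L ≤ 1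
  have hsL2 : s ^ 2 * L ≤ 1 := by
    have hsqL : 0 < Real.sqrt L := Real.sqrt_pos.mpr hL0
    have h1 : s * Real.sqrt L ≤ 1 := by
      rw [div_eq_mul_inv, one_mul] at hsL
      calc s * Real.sqrt L ≤ (Real.sqrt L)⁻¹ * Real.sqrt L :=
            mul_le_mul_of_nonneg_right hsL hsqL.le
        _ = 1 := inv_mul_cancel₀ hsqL.ne'
    have h2 : (s * Real.sqrt L) ^ 2 ≤ 1 := by
      nlinarith [mul_pos hs hsqL]
    calc s ^ 2 * L = (s * Real.sqrt L) ^ 2 := by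
          rw [mul_pow, Real.sq_sqrt hL0.le]
      _ ≤ 1 := h2
  -- vector identities
  have key1 : c • (a • (xp - xstar) + c • vp) = (a*c) • A + (1:ℝ) • v + (-s) • g := by
    rw [hxp, hvp, hv', hA]
    match_scalars <;> field_simp <;> (try ring) <;> tauto
  have key2 : a • (x - xstar) + c • v = a • A + (1:ℝ) • v + (0:ℝ) • g := by
    rw [hA, hx']
    match_scalars <;> ring
  -- norms
  have hU : c ^ 2 * ‖a • (xp - xstar) + c • vp‖ ^ 2 =
      (a*c)^2*‖A‖^2 + ‖v‖^2 + s^2*‖g‖^2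
        + 2*(a*c)*⟪A,v⟫_ℝ + 2*(a*c)*(-s)*⟪A,g⟫_ℝ + 2*(-s)*⟪v,g⟫_ℝ := by
    have h1 : ‖c • (a • (xp - xstar) + c • vp)‖ ^ 2
        = c ^ 2 * ‖a • (xp - xstar) + c • vp‖ ^ 2 := by
      rw [norm_smul, Real.norm_eq_abs, abs_of_pos hc0, mul_pow]
    rw [← h1, key1]
    rw [agd_expand_norm]
    ring
  have hW : ‖a • (x - xstar) + c • v‖ ^ 2 =
      a^2*‖A‖^2 + ‖v‖^2 + 2*a*⟪A,v⟫_ℝ := by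
    rw [key2, agd_expand_norm]; ring
  -- descent step
  have hdq : f xp ≤ f x' - 1/(2*L)*‖g‖^2 := by
    have hd := agd_descent hL0 hdiff hsmooth x' xp
    have hxpx : xp - x' = (-(1/L)) • g := by rw [hxp]; module
    rw [hxpx] at hd
    rw [real_inner_smul_right, real_inner_self_eq_norm_sq, norm_smul] at hd
    have : (L / 2) * (‖(-(1/L))‖ * ‖g‖)^2 = 1/(2*L) * ‖g‖^2 := by
      rw [Real.norm_eq_abs]
      rw [abs_of_nonpos (neg_nonpos.mpr (by positivity : (0:ℝ) ≤ 1/L))]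
      field_simp
    rw [this] at hd
    have h2 : -(1/L) * ‖g‖^2 + 1/(2*L)*‖g‖^2 = -(1/(2*L))*‖g‖^2 := by field_simp; ring
    nlinarith [hd]
  -- strong convexity at x and xstar
  have hs1 : f x' ≤ f x + s * ⟪g,v⟫_ℝ - α/2 * (s^2 * ‖v‖^2) := by
    have h := hsc x x'
    have hxx : x - x' = (-s) • v := by rw [hx']; module
    rw [hxx, real_inner_smul_right, norm_smul, Real.norm_eq_abs,
      abs_of_nonpos (by linarith : -s ≤ 0)] at h
    nlinarith [h]
  have hs2 : f x' ≤ f xstar + ⟪g,A⟫_ℝ - α/2 * ‖A‖^2 := by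
    have h := hsc xstar x'
    have hxx : xstar - x' = (-1 : ℝ) • A := by rw [hA]; module
    rw [hxx, real_inner_smul_right, norm_smul] at h
    simp only [Real.norm_eq_abs] at h
    rw [abs_of_nonpos (by norm_num : (-1:ℝ) ≤ 0)] at h
    nlinarith [h]
  -- Cauchy-Schwarz / AM-GM
  have hAM : 2*s*⟪v,g⟫_ℝ ≤ ‖v‖^2 + s^2*‖g‖^2 := by
    have h1 : ⟪v,g⟫_ℝ ≤ ‖v‖ * ‖g‖ := real_inner_le_norm v g
    nlinarith [sq_nonneg (‖v‖ - s * ‖g‖), norm_nonneg v, norm_nonneg g, hs]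
  have hcomm : ⟪g,v⟫_ℝ = ⟪v,g⟫_ℝ := real_inner_comm v g
  have hcomm2 : ⟪g,A⟫_ℝ = ⟪A,g⟫_ℝ := real_inner_comm A g
  rw [hcomm] at hs1
  rw [hcomm2] at hs2
  -- abbreviations
  set F1 := f x - f xstar with hF1
  set F2 := f x' - f xstar with hF2
  set F3 := f xp - f xstar with hF3
  -- main polynomial inequality, scaled by 2 * L * c^2 etc.
  have hmain : L * (c^2 * (2*F3 + ‖a • (xp - xstar) + c • vp‖^2)) ≤
      L * (c * (2*F1 + ‖a • (x - xstar) + c • v‖^2)) := by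
    have t1 : 2*L*c^2*F3 ≤ 2*L*c^2*F2 - c^2*‖g‖^2 := by
      have h := mul_le_mul_of_nonneg_left hdq (by positivity : (0:ℝ) ≤ 2*L*c^2)
      have he : 2*L*c^2*(f x' - 1/(2*L)*‖g‖^2) = 2*L*c^2*(f x') - c^2*‖g‖^2 := by
        field_simp
      rw [he] at h
      simp only [hF3, hF2]; linarith
    have t2 : 2*L*c*F2 ≤ 2*L*c*F1 + 2*L*c*s*⟪v,g⟫_ℝ - L*c*(s*a)^2*‖v‖^2 := by
      have h := mul_le_mul_of_nonneg_left hs1 (by positivity : (0:ℝ) ≤ 2*L*c)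
      have he : 2*L*c*(f x + s*⟪v,g⟫_ℝ - α/2*(s^2*‖v‖^2))
          = 2*L*c*(f x) + 2*L*c*s*⟪v,g⟫_ℝ - L*c*(s*a)^2*‖v‖^2 := by
        rw [← ha2]; ring
      rw [he] at h
      simp only [hF2, hF1]; linarith
    have t3 : 2*L*c*(s*a)*F2 ≤ 2*L*c*(s*a)*⟪A,g⟫_ℝ - L*c*(s*a)*a^2*‖A‖^2 := by
      have h := mul_le_mul_of_nonneg_left hs2
        (by positivity : (0:ℝ) ≤ 2*L*c*(s*a))
      have he : 2*L*c*(s*a)*(f xstar + ⟪A,g⟫_ℝ - α/2*‖A‖^2)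
          = 2*L*c*(s*a)*(f xstar) + 2*L*c*(s*a)*⟪A,g⟫_ℝ - L*c*(s*a)*a^2*‖A‖^2 := by
        rw [← ha2]; ring
      rw [he] at h
      simp only [hF2]; linarith
    have t4 : 2*L*(s*a)*s*⟪v,g⟫_ℝ ≤ L*(s*a)*‖v‖^2 + L*(s*a)*s^2*‖g‖^2 := by
      have h := mul_le_mul_of_nonneg_left hAM (by positivity : (0:ℝ) ≤ L*(s*a))
      have he : L*(s*a)*(‖v‖^2 + s^2*‖g‖^2) = L*(s*a)*‖v‖^2 + L*(s*a)*s^2*‖g‖^2 := by ring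
      have he2 : L*(s*a)*(2*s*⟪v,g⟫_ℝ) = 2*L*(s*a)*s*⟪v,g⟫_ℝ := by ring
      rw [he, he2] at h
      linarith
    have t5 : 0 ≤ c^2*‖g‖^2 - L*s^2*c*‖g‖^2 := by
      have h1 : 0 ≤ (c - L*s^2) * (c * ‖g‖^2) := by
        apply mul_nonneg
        · linarith [hsL2, hc1]
        · positivity
      linarith [h1]
    have t6 : 0 ≤ L*c*(s*a)^2*‖v‖^2 := by positivity
    have hc2' : 2*L*c^2*F2 = 2*L*c*F2 + 2*L*c*(s*a)*F2 := by
      rw [hcc]; ring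
    have hUL := congrArg (fun t : ℝ => L * t) hU
    have hWL := congrArg (fun t : ℝ => L * c * t) hW
    rw [hcc] at t1 t2 t3 t5 t6 hc2' hUL hWL ⊢
    linarith [t1, t2, t3, t4, t5, t6, hc2', hUL, hWL]
  -- conclude
  have hdiv : c * (2*F3 + ‖a • (xp - xstar) + c • vp‖^2) ≤
      2*F1 + ‖a • (x - xstar) + c • v‖^2 := by
    have h1 : L * c * (c * (2*F3 + ‖a • (xp - xstar) + c • vp‖^2)) ≤
        L * c * (2*F1 + ‖a • (x - xstar) + c • v‖^2) := by linarith [hmain,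
        (by ring : L * c * (c * (2*F3 + ‖a • (xp - xstar) + c • vp‖^2)) = L * (c^2 * (2*F3 + ‖a • (xp - xstar) + c • vp‖^2)))]
    exact le_of_mul_le_mul_left h1 (by positivity)
  rw [hLya]
  simp only
  rw [inv_mul_eq_div, le_div_iff₀ hc0]
  rw [← hF3, ← hF1]
  clear_value a c g A F1 F2 F3
  linarith [hdiv]
end

section
/- Non-smooth accelerated scheme convergence: suppose at each step n, vectors g_n, δ_n satisfy the decrease condition f(x_{n+1}) − f(z) ≤ ⟨g_n, x'_n − z⟩ − (α/2)‖x'_n − z‖² − (s²/2)‖g_n‖² for all z, where the iteration is x'_n = x_n + s v_n; v'_n = (1+s√α)^{-1}[v_n − (1+s√α)^{-1}(s√α v_n + s g_n)]; x_{n+1} = x'_n − δ_n; v_{n+1} = v'_n + (1+s√α)^{-1}√α δ_n. Then the Lyapunov function L_n = f(x_n) − f(x*) + (1/2)‖√α(x_n − x*) + (1+s√α)v_n‖² satisfies L_{n+1} ≤ (1 + s√α)^{-1} L_n. -/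
set_option maxHeartbeats 1000000

open Real InnerProductSpace

theorem nonsmooth_accelerated_lyapunov_decrease
    {d : ℕ} {f : EuclideanSpace ℝ (Fin d) → ℝ} {α s : ℝ}
    (hα : 0 < α) (hs : 0 < s)
    (hconv : ConvexOn ℝ Set.univ f)
    (xstar : EuclideanSpace ℝ (Fin d)) (hmin : ∀ y, f xstar ≤ f y)
    (x v x' g δ : ℕ → EuclideanSpace ℝ (Fin d))
    (hx' : ∀ n, x' n = x n + s • v n)
    (hxrec : ∀ n, x (n + 1) = x' n - δ n)
    (hvrec : ∀ n, v (n + 1) =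
      (1 + s * Real.sqrt α)⁻¹ • (v n - (1 + s * Real.sqrt α)⁻¹ •
        ((s * Real.sqrt α) • v n + s • g n))
      + ((1 + s * Real.sqrt α)⁻¹ * Real.sqrt α) • δ n)
    (hdec : ∀ n, ∀ z : EuclideanSpace ℝ (Fin d),
      f (x (n + 1)) - f z ≤ ⟪g n, x' n - z⟫_ℝ - (α / 2) * ‖x' n - z‖ ^ 2
        - (s ^ 2 / 2) * ‖g n‖ ^ 2)
    (Lya : ℕ → ℝ)
    (hLya : Lya = fun n => f (x n) - f xstar +
      (1 / 2) * ‖(Real.sqrt α) • (x n - xstar) + (1 + s * Real.sqrt α) • v n‖ ^ 2) :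
    ∀ n, Lya (n + 1) ≤ (1 + s * Real.sqrt α)⁻¹ * Lya n := by
  intro n
  have hr : 0 < Real.sqrt α := Real.sqrt_pos.2 hα
  set r := Real.sqrt α with hrdef
  have hα2 : α = r ^ 2 := (Real.sq_sqrt hα.le).symm
  have hτ : 0 < 1 + s * r := by positivity
  have hτne : (1 + s * r) ≠ 0 := hτ.ne'
  set W := r • (x' n - xstar) + v n with hWdef
  set P := r • v n + g n with hPdef
  have hW : r • (x (n + 1) - xstar) + (1 + s * r) • v (n + 1)
      = (1 + s * r)⁻¹ • ((1 + s * r) • W - s • P) := by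
    rw [hWdef, hPdef, hxrec n, hvrec n, hx' n]
    match_scalars <;> field_simp <;> ring
  have hWn : r • (x n - xstar) + (1 + s * r) • v n = W := by
    rw [hWdef, hx' n]
    match_scalars <;> ring
  have hnorm1 : ‖r • (x (n + 1) - xstar) + (1 + s * r) • v (n + 1)‖ ^ 2
      = ((1 + s * r)⁻¹) ^ 2 * ‖(1 + s * r) • W - s • P‖ ^ 2 := by
    rw [hW, norm_smul, mul_pow, Real.norm_eq_abs, sq_abs]
  have eM : ‖(1 + s * r) • W - s • P‖ ^ 2
      = (1 + s * r) ^ 2 * ‖W‖ ^ 2 - 2 * ((1 + s * r) * s) * ⟪W, P⟫_ℝ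
        + s ^ 2 * ‖P‖ ^ 2 := by
    rw [norm_sub_sq_real]
    simp only [norm_smul, real_inner_smul_left, real_inner_smul_right,
      Real.norm_eq_abs, mul_pow, sq_abs]
    ring
  have e2 : ‖W‖ ^ 2 = r ^ 2 * ‖x' n - xstar‖ ^ 2
      + 2 * r * ⟪x' n - xstar, v n⟫_ℝ + ‖v n‖ ^ 2 := by
    rw [hWdef]
    simp only [norm_add_sq_real, real_inner_smul_left, norm_smul,
      Real.norm_eq_abs, mul_pow, sq_abs]
    ring
  have e3 : ⟪W, P⟫_ℝ = r ^ 2 * ⟪x' n - xstar, v n⟫_ℝ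
      + r * ⟪g n, x' n - xstar⟫_ℝ + r * ‖v n‖ ^ 2 + ⟪g n, v n⟫_ℝ := by
    rw [hWdef, hPdef]
    simp only [inner_add_left, inner_add_right, real_inner_smul_left,
      real_inner_smul_right, real_inner_self_eq_norm_sq]
    rw [real_inner_comm (x' n - xstar) (g n), real_inner_comm (v n) (g n)]
    ring
  have e4 : ‖P‖ ^ 2 = r ^ 2 * ‖v n‖ ^ 2 + 2 * r * ⟪g n, v n⟫_ℝ + ‖g n‖ ^ 2 := by
    rw [hPdef]
    simp only [norm_add_sq_real, real_inner_smul_left, norm_smul,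
      Real.norm_eq_abs, mul_pow, sq_abs]
    rw [real_inner_comm (v n) (g n)]
    ring
  have h1 := hdec n (x n)
  have h2 := hdec n xstar
  have hxd : x' n - x n = s • v n := by rw [hx' n]; module
  rw [hxd, real_inner_smul_right, norm_smul, Real.norm_eq_abs, mul_pow, sq_abs,
    hα2] at h1
  rw [hα2] at h2
  have key : (1 + s * r) ^ 2 * (f (x (n + 1)) - f xstar)
      + 1 / 2 * ‖(1 + s * r) • W - s • P‖ ^ 2
      ≤ (1 + s * r) * (f (x n) - f xstar + 1 / 2 * ‖W‖ ^ 2) := by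
    rw [eM, e2, e3, e4]
    have H1 := mul_le_mul_of_nonneg_left h1 hτ.le
    have H2 := mul_le_mul_of_nonneg_left h2 (show (0:ℝ) ≤ (1 + s * r) * (s * r) by positivity)
    have hintA : 0 ≤ s ^ 2 * r * (‖g n‖ * ‖v n‖ - ⟪g n, v n⟫_ℝ) :=
      mul_nonneg (by positivity) (sub_nonneg.2 (real_inner_le_norm _ _))
    have hintB : 0 ≤ s * r * (‖v n‖ - s * ‖g n‖) ^ 2 := by positivity
    have hintC : 0 ≤ s ^ 2 * r ^ 2 * ‖v n‖ ^ 2 := by positivity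
    have hintD : 0 ≤ s ^ 3 * r ^ 3 * ‖v n‖ ^ 2 := by positivity
    have hintE : 0 ≤ s ^ 3 * r * ‖g n‖ ^ 2 := by positivity
    have hintF : 0 ≤ s ^ 4 * r ^ 2 * ‖g n‖ ^ 2 := by positivity
    linarith [H1, H2, hintA, hintB, hintC, hintD, hintE, hintF]
  simp only [hLya]
  rw [hnorm1, hWn]
  rw [← mul_le_mul_iff_right₀ (show (0:ℝ) < (1 + s * r) ^ 2 by positivity)]
  calc (1 + s * r) ^ 2 * (f (x (n + 1)) - f xstar
        + 1 / 2 * (((1 + s * r)⁻¹) ^ 2 * ‖(1 + s * r) • W - s • P‖ ^ 2))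
      = (1 + s * r) ^ 2 * (f (x (n + 1)) - f xstar)
        + 1 / 2 * ‖(1 + s * r) • W - s • P‖ ^ 2 := by
        field_simp
    _ ≤ (1 + s * r) * (f (x n) - f xstar + 1 / 2 * ‖W‖ ^ 2) := key
    _ = (1 + s * r) ^ 2 * ((1 + s * r)⁻¹ * (f (x n) - f xstar + 1 / 2 * ‖W‖ ^ 2)) := by
        field_simp
end

section
/- In the non-smooth accelerated scheme with v₀ = 0 and the decrease condition holding at every iteration, f(x_n) − f(x*) ≤ (1 + s√α)^{-n} (f(x₀) − f(x*) + (α/2)‖x₀ − x*‖²) for all n. -/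
open Real InnerProductSpace

set_option maxHeartbeats 1000000 in
theorem nonsmooth_accelerated_convergence
    {d : ℕ} {f : EuclideanSpace ℝ (Fin d) → ℝ} {α s : ℝ}
    (hα : 0 < α) (hs : 0 < s)
    (hconv : ConvexOn ℝ Set.univ f)
    (xstar : EuclideanSpace ℝ (Fin d)) (hmin : ∀ y, f xstar ≤ f y)
    (x v x' g δ : ℕ → EuclideanSpace ℝ (Fin d))
    (hx' : ∀ n, x' n = x n + s • v n)
    (hxrec : ∀ n, x (n + 1) = x' n - δ n)
    (hvrec : ∀ n, v (n + 1) =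
      (1 + s * Real.sqrt α)⁻¹ • (v n - (1 + s * Real.sqrt α)⁻¹ •
        ((s * Real.sqrt α) • v n + s • g n))
      + ((1 + s * Real.sqrt α)⁻¹ * Real.sqrt α) • δ n)
    (hdec : ∀ n, ∀ z : EuclideanSpace ℝ (Fin d),
      f (x (n + 1)) - f z ≤ ⟪g n, x' n - z⟫_ℝ - (α / 2) * ‖x' n - z‖ ^ 2
        - (s ^ 2 / 2) * ‖g n‖ ^ 2)
    (hv0 : v 0 = 0) :
    ∀ n : ℕ, f (x n) - f xstar ≤ ((1 + s * Real.sqrt α)⁻¹) ^ n *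
      (f (x 0) - f xstar + (α / 2) * ‖x 0 - xstar‖ ^ 2) := by
  have hA0 : 0 < Real.sqrt α := Real.sqrt_pos.mpr hα
  set A : ℝ := Real.sqrt α with hAdef
  have hA2 : A ^ 2 = α := Real.sq_sqrt hα.le
  have hc0 : 0 < s * A := mul_pos hs hA0
  have hD0 : 0 < 1 + s * A := by linarith
  set τ : ℝ := (1 + s * A)⁻¹ with hτdef
  have hτ0 : 0 < τ := inv_pos.mpr hD0
  have hτD : τ * (1 + s * A) = 1 := inv_mul_cancel₀ hD0.ne'
  have hτle1 : τ ≤ 1 := by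
    rw [hτdef, inv_le_one_iff₀]; right; linarith
  set E : ℕ → ℝ := fun n =>
    f (x n) - f xstar + (1 / 2) * ‖v n + A • (x' n - xstar)‖ ^ 2 with hEdef
  -- simplification of v (m+1)
  have hv1 : ∀ m, v (m + 1) = (τ ^ 2) • (v m - s • g m) + (τ * A) • δ m := by
    intro m
    rw [hvrec m]
    match_scalars
    · linear_combination (-(1 + s * A)⁻¹) * hτD
    · ring
    · ring
  -- the key vector: w_{m+1} = v(m+1) + A • (x'(m+1) - xstar)
  have hw1 : ∀ m, v (m + 1) + A • (x' (m + 1) - xstar)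
      = (τ + s * A) • v m + A • (x m - xstar) - (τ * s) • g m := by
    intro m
    rw [hx' (m + 1), hxrec m, hx' m, hv1 m]
    match_scalars
    · linear_combination (1 + s * A)⁻¹ * hτD
    · linear_combination (-s * (1 + s * A)⁻¹) * hτD
    · linear_combination A * hτD
    · ring
    · ring
  clear_value A τ
  have key : ∀ m, E (m + 1) ≤ τ * E m := by
    intro m
    have h1 := hdec m (x m)
    have h2 := hdec m xstar
    have hx'm : x' m - x m = s • v m := by rw [hx' m]; abel
    have hx's : x' m - xstar = (x m - xstar) + s • v m := by rw [hx' m]; abel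
    rw [hx'm] at h1
    rw [hx's] at h2
    -- scalar abbreviations
    set V := ‖v m‖ ^ 2 with hV
    set G := ‖g m‖ ^ 2 with hG
    set U := ‖x m - xstar‖ ^ 2 with hU
    set a1 := ⟪v m, g m⟫_ℝ with ha1
    set a2 := ⟪x m - xstar, v m⟫_ℝ with ha2
    set a3 := ⟪x m - xstar, g m⟫_ℝ with ha3
    -- expand the norms appearing
    have expand : ∀ (p q r : ℝ),
        ‖p • v m + q • (x m - xstar) + r • g m‖ ^ 2
          = p ^ 2 * V + q ^ 2 * U + r ^ 2 * G
            + 2 * p * q * a2 + 2 * p * r * a1 + 2 * q * r * a3 := by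
      intro p q r
      rw [← real_inner_self_eq_norm_sq]
      simp only [inner_add_left, inner_add_right, inner_smul_left, inner_smul_right,
        real_inner_self_eq_norm_sq, RCLike.ofReal_real_eq_id, id, conj_trivial]
      rw [hV, hU, hG, ha1, ha2, ha3, real_inner_comm (v m) (x m - xstar),
        real_inner_comm (g m) (x m - xstar), real_inner_comm (g m) (v m)]
      ring
    have hnw1 : ‖v (m + 1) + A • (x' (m + 1) - xstar)‖ ^ 2
        = (τ + s * A) ^ 2 * V + A ^ 2 * U + (τ * s) ^ 2 * G
          + 2 * (τ + s * A) * A * a2 - 2 * (τ + s * A) * (τ * s) * a1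
          - 2 * A * (τ * s) * a3 := by
      have heq : v (m + 1) + A • (x' (m + 1) - xstar)
          = (τ + s * A) • v m + A • (x m - xstar) + (-(τ * s)) • g m := by
        rw [hw1 m]; module
      rw [heq, expand]; ring
    have hnw0 : ‖v m + A • (x' m - xstar)‖ ^ 2
        = (1 + s * A) ^ 2 * V + A ^ 2 * U
          + 2 * (1 + s * A) * A * a2 := by
      have heq : v m + A • (x' m - xstar)
          = (1 + s * A) • v m + A • (x m - xstar) + (0 : ℝ) • g m := by
        rw [hx's]; module
      rw [heq, expand]; ring
    have hsv : ‖s • v m‖ ^ 2 = s ^ 2 * V := by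
      rw [norm_smul, mul_pow, hV]; simp [sq_abs]
    have husv : ‖x m - xstar + s • v m‖ ^ 2 = U + 2 * s * a2 + s ^ 2 * V := by
      have heq : x m - xstar + s • v m
          = s • v m + (1 : ℝ) • (x m - xstar) + (0 : ℝ) • g m := by module
      rw [heq, expand]; ring
    have hgsv : ⟪g m, s • v m⟫_ℝ = s * a1 := by
      rw [inner_smul_right, ha1, real_inner_comm]
    have hgusv : ⟪g m, x m - xstar + s • v m⟫_ℝ = a3 + s * a1 := by
      rw [inner_add_right, inner_smul_right, ha1, ha3,
        real_inner_comm (g m) (x m - xstar), real_inner_comm (g m) (v m)]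
    rw [hsv, hgsv] at h1
    rw [husv, hgusv] at h2
    -- positivity facts
    have hvsg : (0 : ℝ) ≤ V - 2 * s * a1 + s ^ 2 * G := by
      have h := expand 1 0 (-s)
      have h0 : (1 : ℝ) • v m + (0 : ℝ) • (x m - xstar) + (-s) • g m = v m - s • g m := by
        module
      rw [h0] at h
      have hn : (0 : ℝ) ≤ ‖v m - s • g m‖ ^ 2 := sq_nonneg _
      rw [h] at hn
      linarith
    have hVpos : (0 : ℝ) ≤ V := hV ▸ sq_nonneg _
    have hGpos : (0 : ℝ) ≤ G := hG ▸ sq_nonneg _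
    -- the exact quadratic identity
    have hquad :
        (1 / 2) * ((τ + s * A) ^ 2 * V + A ^ 2 * U + (τ * s) ^ 2 * G
            + 2 * (τ + s * A) * A * a2 - 2 * (τ + s * A) * (τ * s) * a1
            - 2 * A * (τ * s) * a3)
          - τ * ((1 / 2) * ((1 + s * A) ^ 2 * V + A ^ 2 * U
            + 2 * (1 + s * A) * A * a2))
          + τ * (s * a1 - α / 2 * (s ^ 2 * V) - s ^ 2 / 2 * G)
          + (1 - τ) * ((a3 + s * a1) - α / 2 * (U + 2 * s * a2 + s ^ 2 * V)
            - s ^ 2 / 2 * G)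
        = -(s * A * τ ^ 2 / 2) * ((V - 2 * s * a1 + s ^ 2 * G)
            + (s * A) * (1 + s * A) * V + (1 + s * A) * s ^ 2 * G) := by
      rw [← hA2, hτdef]
      field_simp
      ring
    have hrhs : -(s * A * τ ^ 2 / 2) * ((V - 2 * s * a1 + s ^ 2 * G)
        + (s * A) * (1 + s * A) * V + (1 + s * A) * s ^ 2 * G) ≤ 0 := by
      have hsum : (0 : ℝ) ≤ (V - 2 * s * a1 + s ^ 2 * G)
          + (s * A) * (1 + s * A) * V + (1 + s * A) * s ^ 2 * G := by
        have t1 : (0 : ℝ) ≤ (s * A) * (1 + s * A) * V :=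
          mul_nonneg (mul_nonneg hc0.le hD0.le) hVpos
        have t2 : (0 : ℝ) ≤ (1 + s * A) * s ^ 2 * G :=
          mul_nonneg (mul_nonneg hD0.le (sq_nonneg s)) hGpos
        linarith
      have hco : (0 : ℝ) ≤ s * A * τ ^ 2 / 2 := by positivity
      have := mul_nonneg hco hsum
      linarith
    have hmul1 : τ * (f (x (m + 1)) - f (x m))
        ≤ τ * (s * a1 - α / 2 * (s ^ 2 * V) - s ^ 2 / 2 * G) :=
      mul_le_mul_of_nonneg_left h1 hτ0.le
    have hmul2 : (1 - τ) * (f (x (m + 1)) - f xstar)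
        ≤ (1 - τ) * ((a3 + s * a1) - α / 2 * (U + 2 * s * a2 + s ^ 2 * V)
          - s ^ 2 / 2 * G) :=
      mul_le_mul_of_nonneg_left h2 (by linarith)
    simp only [hEdef]
    rw [hnw1, hnw0]
    linarith
  -- induction
  have hE0 : E 0 = f (x 0) - f xstar + α / 2 * ‖x 0 - xstar‖ ^ 2 := by
    simp only [hEdef, hx' 0, hv0, smul_zero, add_zero, zero_add]
    rw [norm_smul, mul_pow, Real.norm_eq_abs]
    have habs : |A| ^ 2 = α := by rw [sq_abs]; exact hA2
    rw [habs]; ring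
  have hEmono : ∀ n, E n ≤ τ ^ n * E 0 := by
    intro n
    induction n with
    | zero => simp
    | succ k ih =>
      calc E (k + 1) ≤ τ * E k := key k
        _ ≤ τ * (τ ^ k * E 0) := mul_le_mul_of_nonneg_left ih hτ0.le
        _ = τ ^ (k + 1) * E 0 := by ring
  intro n
  have hfE : f (x n) - f xstar ≤ E n := by
    simp only [hEdef]
    have hn : (0 : ℝ) ≤ ‖v n + A • (x' n - xstar)‖ ^ 2 := sq_nonneg _
    linarith
  calc f (x n) - f xstar ≤ E n := hfE
    _ ≤ τ ^ n * E 0 := hEmono n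
    _ = τ ^ n * (f (x 0) - f xstar + α / 2 * ‖x 0 - xstar‖ ^ 2) := by rw [hE0]
end

section
/- If f is α-strongly convex, coordinate-wise L_i-smooth, and a coordinate i is sampled with probability proportional to √L_i, then setting s = (Σ_j √L_j)^{-1} and g_n = (1/(s√L_i)) ∇f(x'_n)_i e_i makes E_n(g_n) = ∇f(x'_n), and the coordinate update δ_n = (1/L_i)∇f(x'_n)_i e_i satisfies f(x'_n − δ_n) ≤ f(x'_n) − (s²/2)‖g_n‖². -/
open Real InnerProductSpace

-- auxiliary descent lemma
lemma coord_descent {d : ℕ} {f : EuclideanSpace ℝ (Fin d) → ℝ} {L : Fin d → ℝ}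
    (hL : ∀ i, 0 < L i) (hdiff : Differentiable ℝ f)
    (hcoord : ∀ (x : EuclideanSpace ℝ (Fin d)) (c : ℝ) (i : Fin d),
      |gradient f x i - gradient f (x + c • EuclideanSpace.single i 1) i| ≤ L i * |c|)
    (x : EuclideanSpace ℝ (Fin d)) (c : ℝ) (i : Fin d) :
    f (x + c • EuclideanSpace.single i 1) ≤
      f x + c * gradient f x i + L i / 2 * c ^ 2 := by
  set e : EuclideanSpace ℝ (Fin d) := EuclideanSpace.single i 1 with he
  set φ : ℝ → ℝ := fun t => f (x + (t * c) • e) with hφdef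
  set φ' : ℝ → ℝ := fun t => c * gradient f (x + (t * c) • e) i with hφ'def
  have hderiv : ∀ t, HasDerivAt φ (φ' t) t := by
    intro t
    have hy : HasDerivAt (fun t : ℝ => x + (t * c) • e) (c • e) t := by
      have : HasDerivAt (fun t : ℝ => (t * c) • e) (c • e) t := by
        simpa using ((hasDerivAt_id t).mul_const c).smul_const e
      simpa using this.const_add x
    have hf := ((hdiff (x + (t * c) • e)).hasGradientAt).hasFDerivAt
    have := hf.comp_hasDerivAt t hy
    convert this using 1
    show φ' t = _
    simp only [φ', InnerProductSpace.toDual_apply_apply, real_inner_smul_right, he,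
      EuclideanSpace.inner_single_right, conj_trivial]
    ring
    all_goals rfl
  have hlip : ∀ t u : ℝ, |φ' t - φ' u| ≤ L i * c ^ 2 * |t - u| := by
    intro t u
    have h1 : x + (u * c) • e = (x + (t * c) • e) + ((u - t) * c) • e := by
      module
    have h2 := hcoord (x + (t * c) • e) ((u - t) * c) i
    rw [← h1] at h2
    calc |φ' t - φ' u| = |c| * |gradient f (x + (t*c)•e) i - gradient f (x + (u*c)•e) i| := by
          rw [← abs_mul]; simp only [φ']; ring_nf
      _ ≤ |c| * (L i * |(u - t) * c|) := by
          apply mul_le_mul_of_nonneg_left h2 (abs_nonneg c)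
      _ = L i * c ^ 2 * |t - u| := by
          rw [abs_mul, abs_sub_comm u t, ← sq_abs c]
          ring
  have hcont : Continuous φ' := by
    have : LipschitzWith (Real.toNNReal (L i * c ^ 2)) φ' := by
      apply LipschitzWith.of_dist_le_mul
      intro t u
      simp only [Real.dist_eq]
      calc |φ' t - φ' u| ≤ L i * c ^ 2 * |t - u| := hlip t u
        _ ≤ Real.toNNReal (L i * c ^ 2) * |t - u| := by
            gcongr
            exact Real.le_coe_toNNReal _
    exact this.continuous
  have hFTC : φ 1 - φ 0 = ∫ t in (0:ℝ)..1, φ' t := by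
    rw [intervalIntegral.integral_eq_sub_of_hasDerivAt (fun t _ => hderiv t)
      (hcont.intervalIntegrable 0 1)]
  have hbound : ∀ t ∈ Set.Icc (0:ℝ) 1, φ' t ≤ φ' 0 + L i * c ^ 2 * t := by
    intro t ht
    have := hlip t 0
    rw [sub_zero] at this
    have := (abs_le.mp (this.trans_eq (by rw [abs_of_nonneg ht.1]))).2
    linarith [(abs_le.mp ((hlip t 0).trans_eq (by rw [sub_zero, abs_of_nonneg ht.1]))).2]
  have hint : (∫ t in (0:ℝ)..1, φ' t) ≤ ∫ t in (0:ℝ)..1, (φ' 0 + L i * c ^ 2 * t) := by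
    apply intervalIntegral.integral_mono_on (by norm_num)
      (hcont.intervalIntegrable 0 1)
      ((continuous_const.add (continuous_const.mul continuous_id)).intervalIntegrable 0 1)
    exact hbound
  have hintval : (∫ t in (0:ℝ)..1, (φ' 0 + L i * c ^ 2 * t)) = φ' 0 + L i * c ^ 2 / 2 := by
    have hF : ∀ t : ℝ, HasDerivAt (fun t => φ' 0 * t + L i * c ^ 2 * (t ^ 2 / 2))
        (φ' 0 + L i * c ^ 2 * t) t := by
      intro t
      have h1 := (hasDerivAt_id t).const_mul (φ' 0)
      have h2 := ((hasDerivAt_pow 2 t).div_const 2).const_mul (L i * c ^ 2)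
      convert h1.add h2 using 1
      on_goal 4 => ring
      all_goals rfl
    rw [intervalIntegral.integral_eq_sub_of_hasDerivAt (fun t _ => hF t)
      ((continuous_const.add (continuous_const.mul continuous_id)).intervalIntegrable 0 1)]
    norm_num
    ring
  have h0 : φ 0 = f x := by simp [φ]
  have h1 : φ 1 = f (x + c • e) := by simp [φ]
  have h2 : φ' 0 = c * gradient f x i := by simp [φ']
  nlinarith [hFTC, hint, hintval]

theorem accelerated_coordinate_descent_sampling
    {d : ℕ} {f : EuclideanSpace ℝ (Fin d) → ℝ} {α : ℝ} {L : Fin d → ℝ}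
    (hα : 0 < α) (hL : ∀ i, 0 < L i) (hdiff : Differentiable ℝ f)
    (hsc : ∀ x y : EuclideanSpace ℝ (Fin d),
      f x ≥ f y + ⟪gradient f y, x - y⟫_ℝ + (α / 2) * ‖x - y‖ ^ 2)
    (hcoord : ∀ (x : EuclideanSpace ℝ (Fin d)) (c : ℝ) (i : Fin d),
      |gradient f x i - gradient f (x + c • EuclideanSpace.single i 1) i| ≤ L i * |c|)
    (s : ℝ) (hs : s = (∑ j, Real.sqrt (L j))⁻¹)
    (x' : EuclideanSpace ℝ (Fin d))
    (g δ : Fin d → EuclideanSpace ℝ (Fin d))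
    (hg : ∀ i, g i = ((s * Real.sqrt (L i))⁻¹ * gradient f x' i) •
      EuclideanSpace.single i 1)
    (hδ : ∀ i, δ i = ((L i)⁻¹ * gradient f x' i) • EuclideanSpace.single i 1) :
    (∑ i, (Real.sqrt (L i) / ∑ j, Real.sqrt (L j)) • g i) = gradient f x' ∧
    ∀ i, f (x' - δ i) ≤ f x' - (s ^ 2 / 2) * ‖g i‖ ^ 2 := by
  have hSpos : ∀ _ : Fin d, 0 < ∑ j, Real.sqrt (L j) := fun j =>
    Finset.sum_pos (fun k _ => Real.sqrt_pos.mpr (hL k)) ⟨j, Finset.mem_univ j⟩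
  constructor
  · ext j
    have hS := hSpos j
    have hLj : Real.sqrt (L j) ≠ 0 := (Real.sqrt_pos.mpr (hL j)).ne'
    rw [WithLp.ofLp_sum, Finset.sum_apply j Finset.univ _]
    simp only [hg, PiLp.smul_apply, smul_eq_mul,
      EuclideanSpace.single_apply, mul_ite, mul_one, mul_zero, Finset.sum_ite_eq', Finset.sum_ite_eq,
      Finset.mem_univ, if_true]
    rw [hs]
    field_simp
  · intro i
    have hS := hSpos i
    have hsne : s ≠ 0 := by rw [hs]; exact inv_ne_zero hS.ne'
    have hLi := hL i
    have hLine : Real.sqrt (L i) ≠ 0 := (Real.sqrt_pos.mpr hLi).ne'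
    have hsq : Real.sqrt (L i) ^ 2 = L i := Real.sq_sqrt hLi.le
    have hpt : x' - δ i = x' + (-((L i)⁻¹ * gradient f x' i)) • EuclideanSpace.single i 1 := by
      rw [hδ i]; module
    rw [hpt]
    refine (coord_descent hL hdiff hcoord x' _ i).trans_eq ?_
    rw [hg, norm_smul, EuclideanSpace.norm_single, norm_one, mul_one, Real.norm_eq_abs,
      sq_abs, mul_pow, inv_pow, mul_pow, hsq]
    field_simp
    ring
end
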